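/- Let F be a finite field with q elements, a₂, b₂ ∈ F, n a positive integer, and h ∈ ℝ. Let M₁, M₂ be random variables with values in finite sets and, for j = 1,…,n, let X_{1,j}, X_{2,j}, N_{2,j} be F-valued random variables with Y_{2,j} := a₂X_{1,j} + b₂X_{2,j} + N_{2,j}. Assume that for every j, the random variable N_{2,j} is independent of the tuple (M₁, M₂, X_{1,j}, X_{2,j}, Y_{2,1}, …, Y_{2,j−1}) and satisfies H(N_{2,j}) = h. Then I(M₁; (Y_{2,1},…,Y_{2,n}) | M₂) ≤ n(log q − h). -/

import Mathlib

open scoped BigOperators Classical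

/-- Shannon entropy `H(P) = −∑ P log P` of a pmf on a finite set. -/
noncomputable def Hent {α : Type*} [Fintype α] (P : α → ℝ) : ℝ := ∑ a, Real.negMulLog (P a)

/-- Pushforward pmf of `P` along `f`. -/
noncomputable def pushf {Ω α : Type*} [Fintype Ω] (P : Ω → ℝ) (f : Ω → α) : α → ℝ :=
  fun a => ∑ ω, if f ω = a then P ω else 0

/-- Conditional mutual information `I(X;Y|Z)` of a joint pmf on `α × β × γ`. -/
noncomputable def cmiInfo {α β γ : Type*} [Fintype α] [Fintype β] [Fintype γ]
    (P : α × β × γ → ℝ) : ℝ :=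
  Hent (fun p : α × γ => ∑ b, P (p.1, b, p.2)) + Hent (fun p : β × γ => ∑ a, P (a, p.1, p.2))
    - Hent (fun c : γ => ∑ a, ∑ b, P (a, b, c)) - Hent P

/-- A probability mass function on a finite set. -/
def IsPMF {α : Type*} [Fintype α] (P : α → ℝ) : Prop := (∀ a, 0 ≤ P a) ∧ ∑ a, P a = 1

/-- Independence of the random variables `f` and `g` under the pmf `P`. -/
def Indep {Ω α β : Type*} [Fintype Ω] (P : Ω → ℝ) (f : Ω → α) (g : Ω → β) : Prop :=
  ∀ a b, pushf P (fun ω => (f ω, g ω)) (a, b) = pushf P f a * pushf P g b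

section AuxHelpers

set_option linter.unusedSectionVars false

variable {Ω α β γ : Type*} [Fintype Ω] [Fintype α] [Fintype β] [Fintype γ]

lemma pushf_nonneg (P : Ω → ℝ) (hP : ∀ ω, 0 ≤ P ω) (f : Ω → α) (a : α) : 0 ≤ pushf P f a :=
  Finset.sum_nonneg fun ω _ => by split <;> simp [hP ω]

lemma pushf_sum_eq (P : Ω → ℝ) (f : Ω → α) : ∑ a, pushf P f a = ∑ ω, P ω := by
  unfold pushf
  rw [Finset.sum_comm]
  simp

lemma isPMF_pushf (P : Ω → ℝ) (hP : IsPMF P) (f : Ω → α) : IsPMF (pushf P f) :=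
  ⟨pushf_nonneg P hP.1 f, by rw [pushf_sum_eq, hP.2]⟩

lemma pushf_exists_of_ne_zero {P : Ω → ℝ} {f : Ω → α} {a : α} (h : pushf P f a ≠ 0) :
    ∃ ω, f ω = a := by
  by_contra hc
  push_neg at hc
  exact h (Finset.sum_eq_zero fun ω _ => if_neg (hc ω))

lemma Hent_pushf_recode (P : Ω → ℝ) (f : Ω → α) (g : Ω → β)
    (u : α → β) (v : β → α) (hu : ∀ ω, g ω = u (f ω)) (hv : ∀ ω, f ω = v (g ω)) :
    Hent (pushf P g) = Hent (pushf P f) := by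
  set Q := pushf P f with hQ
  have hvu : ∀ a, Q a ≠ 0 → v (u a) = a := by
    intro a ha
    obtain ⟨ω, hω⟩ := pushf_exists_of_ne_zero ha
    rw [← hω, ← hu, ← hv]
  set T : Finset α := Finset.univ.filter (fun a => Q a ≠ 0) with hT
  have hmemT : ∀ a, a ∈ T ↔ Q a ≠ 0 := by intro a; simp [hT]
  have hinj : ∀ a ∈ T, ∀ a' ∈ T, u a = u a' → a = a' := by
    intro a ha a' ha' hu'
    rw [← hvu a ((hmemT a).1 ha), ← hvu a' ((hmemT a').1 ha'), hu']
  have hpg : ∀ b, pushf P g b = ∑ a ∈ T, if u a = b then Q a else 0 := by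
    intro b
    have step1 : pushf P g b = ∑ a, if u a = b then Q a else 0 := by
      have e1 : ∀ a, (if u a = b then Q a else 0)
          = ∑ ω, if f ω = a then (if u a = b then P ω else 0) else 0 := by
        intro a
        by_cases hab : u a = b
        · simp only [if_pos hab, hQ, pushf]
        · simp only [if_neg hab]
          exact (Finset.sum_eq_zero fun ω _ => by split <;> rfl).symm
      rw [Finset.sum_congr rfl fun a _ => e1 a, Finset.sum_comm]
      refine Finset.sum_congr rfl fun ω _ => ?_
      rw [Finset.sum_ite_eq Finset.univ (f ω) (fun a => if u a = b then P ω else 0),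
        if_pos (Finset.mem_univ _), hu ω]
    rw [step1]
    exact (Finset.sum_subset (Finset.subset_univ T) (fun a _ ha => by
      have : Q a = 0 := by by_contra hc; exact ha ((hmemT a).2 hc)
      simp [this])).symm
  calc Hent (pushf P g) = ∑ b, Real.negMulLog (pushf P g b) := rfl
    _ = ∑ b ∈ T.image u, Real.negMulLog (pushf P g b) := by
        refine (Finset.sum_subset (Finset.subset_univ _) fun b _ hb => ?_).symm
        have : pushf P g b = 0 := by
          rw [hpg]
          exact Finset.sum_eq_zero fun a ha => if_neg fun he => hb (Finset.mem_image.2 ⟨a, ha, he⟩)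
        simp [this, Real.negMulLog]
    _ = ∑ a ∈ T, Real.negMulLog (pushf P g (u a)) := Finset.sum_image hinj
    _ = ∑ a ∈ T, Real.negMulLog (Q a) := by
        refine Finset.sum_congr rfl fun a ha => ?_
        congr 1
        rw [hpg]
        rw [Finset.sum_eq_single_of_mem a ha
          (fun a' ha' hne => if_neg fun he => hne (hinj a' ha' a ha he))]
        simp
    _ = ∑ a, Real.negMulLog (Q a) := by
        refine Finset.sum_subset (Finset.subset_univ T) fun a _ ha => ?_
        have : Q a = 0 := by by_contra hc; exact ha ((hmemT a).2 hc)
        simp [this, Real.negMulLog]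
    _ = Hent Q := rfl

lemma gibbs_pt {a b : ℝ} (ha : 0 ≤ a) (hb : 0 ≤ b) (hab : b = 0 → a = 0) :
    a - b ≤ a * Real.log a - a * Real.log b := by
  rcases eq_or_lt_of_le ha with h0 | hapos
  · simp [← h0]; linarith
  · have hbpos : 0 < b := by
      rcases eq_or_lt_of_le hb with h0 | h; · exact absurd (hab h0.symm) (by linarith)
      · exact h
    have hlog := Real.log_le_sub_one_of_pos (div_pos hbpos hapos)
    rw [Real.log_div hbpos.ne' hapos.ne'] at hlog
    have h2 : a * (Real.log b - Real.log a) ≤ a * (b / a - 1) :=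
      mul_le_mul_of_nonneg_left hlog ha
    have h3 : a * (b / a) = b := by field_simp
    nlinarith

lemma gibbs {ι : Type*} [Fintype ι] (a b : ι → ℝ) (ha : ∀ i, 0 ≤ a i) (hb : ∀ i, 0 ≤ b i)
    (hab : ∀ i, b i = 0 → a i = 0) (hsum : ∑ i, b i ≤ ∑ i, a i) :
    ∑ i, a i * Real.log (b i) ≤ ∑ i, a i * Real.log (a i) := by
  have key : ∑ i, (a i - b i) ≤ ∑ i, (a i * Real.log (a i) - a i * Real.log (b i)) :=
    Finset.sum_le_sum fun i _ => gibbs_pt (ha i) (hb i) (hab i)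
  rw [Finset.sum_sub_distrib, Finset.sum_sub_distrib] at key
  linarith

lemma Hent_eq (P : α → ℝ) : Hent P = -∑ a, P a * Real.log (P a) := by
  simp [Hent, Real.negMulLog, Finset.sum_neg_distrib]

lemma Hent_le_log_card (P : α → ℝ) (hP : IsPMF P) : Hent P ≤ Real.log (Fintype.card α) := by
  have hne : Nonempty α := by
    by_contra hc
    rw [not_nonempty_iff] at hc
    have := hP.2
    rw [Finset.univ_eq_empty, Finset.sum_empty] at this
    norm_num at this
  have hcard : (0 : ℝ) < Fintype.card α := by
    have := Fintype.card_pos (α := α); positivity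
  have := gibbs P (fun _ => (Fintype.card α : ℝ)⁻¹) hP.1
    (fun _ => by positivity) (fun i hi => absurd hi (by positivity)) (by
      rw [Finset.sum_const, hP.2]
      simp [nsmul_eq_mul, mul_inv_cancel₀ hcard.ne'])
  rw [Hent_eq]
  have h2 : ∑ i, P i * Real.log ((Fintype.card α : ℝ)⁻¹)
      = -Real.log (Fintype.card α) := by
    rw [← Finset.sum_mul, hP.2, Real.log_inv]; ring
  linarith

lemma Hent_pushf_indep (P : Ω → ℝ) (hP : IsPMF P) (f : Ω → α) (g : Ω → β)
    (hind : Indep P f g) :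
    Hent (pushf P (fun ω => (f ω, g ω))) = Hent (pushf P f) + Hent (pushf P g) := by
  have hf1 : ∑ a, pushf P f a = 1 := by rw [pushf_sum_eq, hP.2]
  have hg1 : ∑ b, pushf P g b = 1 := by rw [pushf_sum_eq, hP.2]
  unfold Hent
  rw [Fintype.sum_prod_type]
  calc (∑ a, ∑ b, Real.negMulLog (pushf P (fun ω => (f ω, g ω)) (a, b)))
      = ∑ a, ∑ b, (pushf P g b * Real.negMulLog (pushf P f a)
          + pushf P f a * Real.negMulLog (pushf P g b)) := by
        refine Finset.sum_congr rfl fun a _ => Finset.sum_congr rfl fun b _ => ?_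
        rw [hind a b, Real.negMulLog_mul]
    _ = ∑ a, ((∑ b, pushf P g b) * Real.negMulLog (pushf P f a)
          + pushf P f a * ∑ b, Real.negMulLog (pushf P g b)) := by
        refine Finset.sum_congr rfl fun a _ => ?_
        rw [Finset.sum_add_distrib, ← Finset.sum_mul, ← Finset.mul_sum]
    _ = ∑ a, Real.negMulLog (pushf P f a) + ∑ b, Real.negMulLog (pushf P g b) := by
        rw [Finset.sum_add_distrib]
        rw [hg1]
        simp only [one_mul]
        rw [← Finset.sum_mul, hf1, one_mul]

lemma submod (Q : α × β × γ → ℝ) (hQ : IsPMF Q) :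
    Hent Q + Hent (fun c : γ => ∑ a, ∑ b, Q (a, b, c))
      ≤ Hent (fun p : α × γ => ∑ b, Q (p.1, b, p.2))
        + Hent (fun p : β × γ => ∑ a, Q (a, p.1, p.2)) := by
  set pac : α → γ → ℝ := fun a c => ∑ b, Q (a, b, c) with hpac_def
  set pbc : β → γ → ℝ := fun b c => ∑ a, Q (a, b, c) with hpbc_def
  set pc : γ → ℝ := fun c => ∑ a, ∑ b, Q (a, b, c) with hpc_def
  have hQ0 := hQ.1
  have hpac0 : ∀ a c, 0 ≤ pac a c := fun a c => Finset.sum_nonneg fun _ _ => hQ0 _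
  have hpbc0 : ∀ b c, 0 ≤ pbc b c := fun b c => Finset.sum_nonneg fun _ _ => hQ0 _
  have hpc0 : ∀ c, 0 ≤ pc c := fun c =>
    Finset.sum_nonneg fun _ _ => Finset.sum_nonneg fun _ _ => hQ0 _
  have hQle_ac : ∀ a b c, Q (a, b, c) ≤ pac a c := fun a b c =>
    Finset.single_le_sum (fun b' _ => hQ0 (a, b', c)) (Finset.mem_univ b)
  have hQle_bc : ∀ a b c, Q (a, b, c) ≤ pbc b c := fun a b c =>
    Finset.single_le_sum (fun a' _ => hQ0 (a', b, c)) (Finset.mem_univ a)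
  have hsum_pac : ∀ c, ∑ a, pac a c = pc c := fun c => rfl
  have hsum_pbc : ∀ c, ∑ b, pbc b c = pc c := fun c => Finset.sum_comm
  have hQle_c : ∀ a b c, Q (a, b, c) ≤ pc c := by
    intro a b c
    refine (hQle_ac a b c).trans ?_
    rw [← hsum_pac c]
    exact Finset.single_le_sum (fun a' _ => hpac0 a' c) (Finset.mem_univ a)
  set B : α × β × γ → ℝ := fun p =>
    if pc p.2.2 = 0 then 0 else pac p.1 p.2.2 * pbc p.2.1 p.2.2 / pc p.2.2 with hB_def
  have hB0 : ∀ p, 0 ≤ B p := by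
    intro p
    simp only [hB_def]
    split
    · exact le_refl 0
    · exact div_nonneg (mul_nonneg (hpac0 _ _) (hpbc0 _ _)) (hpc0 _)
  have hBabs : ∀ p, B p = 0 → Q p = 0 := by
    rintro ⟨a, b, c⟩ h0
    simp only [hB_def] at h0
    by_cases hc : pc c = 0
    · exact le_antisymm (by simpa [hc] using hQle_c a b c) (hQ0 _)
    · rw [if_neg hc] at h0
      rcases mul_eq_zero.1 ((div_eq_zero_iff.1 h0).resolve_right hc) with h | h
      · exact le_antisymm (by simpa [h] using hQle_ac a b c) (hQ0 _)
      · exact le_antisymm (by simpa [h] using hQle_bc a b c) (hQ0 _)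
  have hsum3 : ∀ f : α × β × γ → ℝ, ∑ p, f p = ∑ c, ∑ a, ∑ b, f (a, b, c) := by
    intro f
    rw [Fintype.sum_prod_type]
    have e : ∀ a : α, ∑ q : β × γ, f (a, q) = ∑ c, ∑ b, f (a, b, c) := by
      intro a; rw [Fintype.sum_prod_type]; exact Finset.sum_comm
    rw [Finset.sum_congr rfl fun a _ => e a]
    exact Finset.sum_comm
  have hQsum : ∑ p, Q p = 1 := hQ.2
  have hpcsum : ∑ c, pc c = 1 := by
    rw [← hQsum, hsum3 Q]
  have hBsum : ∑ p, B p ≤ ∑ p, Q p := by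
    rw [hQsum, hsum3 B, ← hpcsum]
    refine Finset.sum_le_sum fun c _ => ?_
    by_cases hc : pc c = 0
    · simp only [hB_def, hc, if_pos rfl]
      simp [hc.symm ▸ hpc0 c, hc]
    · have e1 : ∀ a : α, ∑ b, B (a, b, c) = pac a c := by
        intro a
        simp only [hB_def, if_neg hc]
        rw [← Finset.sum_div, ← Finset.mul_sum, hsum_pbc c, mul_div_assoc,
          div_self hc, mul_one]
      rw [Finset.sum_congr rfl fun a _ => e1 a, hsum_pac c]
  have hgibbs := gibbs Q B hQ0 hB0 hBabs hBsum
  have hlogB : ∀ p : α × β × γ, Q p * Real.log (B p)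
      = Q p * Real.log (pac p.1 p.2.2) + Q p * Real.log (pbc p.2.1 p.2.2)
        - Q p * Real.log (pc p.2.2) := by
    rintro ⟨a, b, c⟩
    by_cases hq : Q (a, b, c) = 0
    · simp [hq]
    · have hQpos : 0 < Q (a, b, c) := lt_of_le_of_ne (hQ0 _) (Ne.symm hq)
      have hpcne : pc c ≠ 0 := fun h0 => hq (le_antisymm (h0 ▸ hQle_c a b c) (hQ0 _))
      have hpacne : pac a c ≠ 0 := fun h0 => hq (le_antisymm (h0 ▸ hQle_ac a b c) (hQ0 _))
      have hpbcne : pbc b c ≠ 0 := fun h0 => hq (le_antisymm (h0 ▸ hQle_bc a b c) (hQ0 _))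
      simp only [hB_def, if_neg hpcne]
      rw [Real.log_div (mul_ne_zero hpacne hpbcne) hpcne, Real.log_mul hpacne hpbcne]
      ring
  rw [Finset.sum_congr rfl fun p _ => hlogB p] at hgibbs
  have hsplit : ∑ p : α × β × γ, (Q p * Real.log (pac p.1 p.2.2)
        + Q p * Real.log (pbc p.2.1 p.2.2) - Q p * Real.log (pc p.2.2))
      = ∑ p : α × β × γ, Q p * Real.log (pac p.1 p.2.2)
        + ∑ p : α × β × γ, Q p * Real.log (pbc p.2.1 p.2.2)
        - ∑ p : α × β × γ, Q p * Real.log (pc p.2.2) := by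
    rw [Finset.sum_sub_distrib, Finset.sum_add_distrib]
  rw [hsplit] at hgibbs
  have c1 : ∑ p : α × β × γ, Q p * Real.log (pac p.1 p.2.2)
      = ∑ a, ∑ c, pac a c * Real.log (pac a c) := by
    rw [hsum3 (fun p => Q p * Real.log (pac p.1 p.2.2))]
    dsimp only
    rw [Finset.sum_comm]
    exact Finset.sum_congr rfl fun a _ => Finset.sum_congr rfl fun c _ => by
      rw [← Finset.sum_mul]
  have c2 : ∑ p : α × β × γ, Q p * Real.log (pbc p.2.1 p.2.2)
      = ∑ b, ∑ c, pbc b c * Real.log (pbc b c) := by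
    rw [hsum3 (fun p => Q p * Real.log (pbc p.2.1 p.2.2))]
    dsimp only
    have e : ∀ c : γ, ∑ a, ∑ b, Q (a, b, c) * Real.log (pbc b c)
        = ∑ b, pbc b c * Real.log (pbc b c) := by
      intro c
      rw [Finset.sum_comm]
      exact Finset.sum_congr rfl fun b _ => by rw [← Finset.sum_mul]
    rw [Finset.sum_congr rfl fun c _ => e c]
    exact Finset.sum_comm
  have c3 : ∑ p : α × β × γ, Q p * Real.log (pc p.2.2)
      = ∑ c, pc c * Real.log (pc c) := by
    rw [hsum3 (fun p => Q p * Real.log (pc p.2.2))]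
    dsimp only
    refine Finset.sum_congr rfl fun c _ => ?_
    have e : ∀ a : α, ∑ b, Q (a, b, c) * Real.log (pc c)
        = pac a c * Real.log (pc c) := fun a => by rw [← Finset.sum_mul]
    rw [Finset.sum_congr rfl fun a _ => e a, ← Finset.sum_mul, hsum_pac c]
  rw [c1, c2, c3] at hgibbs
  have hq : Hent Q = -∑ p : α × β × γ, Q p * Real.log (Q p) := Hent_eq Q
  have hcc : Hent pc = -∑ c, pc c * Real.log (pc c) := Hent_eq pc
  have hac : Hent (fun p : α × γ => ∑ b, Q (p.1, b, p.2))
      = -∑ a, ∑ c, pac a c * Real.log (pac a c) := by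
    rw [Hent_eq, Fintype.sum_prod_type]
  have hbc : Hent (fun p : β × γ => ∑ a, Q (a, p.1, p.2))
      = -∑ b, ∑ c, pbc b c * Real.log (pbc b c) := by
    rw [Hent_eq, Fintype.sum_prod_type]
  rw [hq, hcc, hac, hbc]
  linarith

lemma pushf_marg_ac (P : Ω → ℝ) (f : Ω → α) (g : Ω → β) (k : Ω → γ) :
    (fun p : α × γ => ∑ b, pushf P (fun ω => (f ω, g ω, k ω)) (p.1, b, p.2))
      = pushf P (fun ω => (f ω, k ω)) := by
  funext p
  unfold pushf
  rw [Finset.sum_comm]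
  refine Finset.sum_congr rfl fun ω _ => ?_
  by_cases h1 : f ω = p.1 ∧ k ω = p.2
  · simp [Prod.ext_iff, h1.1, h1.2, Finset.sum_ite_eq]
  · rw [if_neg (by simp [Prod.ext_iff]; tauto)]
    exact Finset.sum_eq_zero fun b _ => if_neg (by simp [Prod.ext_iff]; tauto)

lemma pushf_marg_bc (P : Ω → ℝ) (f : Ω → α) (g : Ω → β) (k : Ω → γ) :
    (fun p : β × γ => ∑ a, pushf P (fun ω => (f ω, g ω, k ω)) (a, p.1, p.2))
      = pushf P (fun ω => (g ω, k ω)) := by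
  funext p
  unfold pushf
  rw [Finset.sum_comm]
  refine Finset.sum_congr rfl fun ω _ => ?_
  by_cases h1 : g ω = p.1 ∧ k ω = p.2
  · simp [Prod.ext_iff, h1.1, h1.2, Finset.sum_ite_eq]
  · rw [if_neg (by simp [Prod.ext_iff]; tauto)]
    exact Finset.sum_eq_zero fun a _ => if_neg (by simp [Prod.ext_iff]; tauto)

lemma pushf_marg_snd (P : Ω → ℝ) (g : Ω → β) (k : Ω → γ) :
    (fun c : γ => ∑ b : β, pushf P (fun ω => (g ω, k ω)) (b, c)) = pushf P k := by
  funext c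
  unfold pushf
  rw [Finset.sum_comm]
  refine Finset.sum_congr rfl fun ω _ => ?_
  by_cases h1 : k ω = c
  · simp [Prod.ext_iff, h1, Finset.sum_ite_eq]
  · rw [if_neg h1]
    exact Finset.sum_eq_zero fun b _ => if_neg (by simp [Prod.ext_iff]; tauto)

lemma pushf_marg_c (P : Ω → ℝ) (f : Ω → α) (g : Ω → β) (k : Ω → γ) :
    (fun c : γ => ∑ a, ∑ b, pushf P (fun ω => (f ω, g ω, k ω)) (a, b, c))
      = pushf P k := by
  funext c
  rw [Finset.sum_comm]
  have e1 : ∀ b : β, ∑ a, pushf P (fun ω => (f ω, g ω, k ω)) (a, b, c)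
      = pushf P (fun ω => (g ω, k ω)) (b, c) :=
    fun b => congrFun (pushf_marg_bc P f g k) (b, c)
  rw [Finset.sum_congr rfl fun b _ => e1 b]
  exact congrFun (pushf_marg_snd P g k) c

lemma HP_submod (P : Ω → ℝ) (hP : IsPMF P) (f : Ω → α) (g : Ω → β) (k : Ω → γ) :
    Hent (pushf P (fun ω => (f ω, g ω, k ω))) + Hent (pushf P k)
      ≤ Hent (pushf P (fun ω => (f ω, k ω))) + Hent (pushf P (fun ω => (g ω, k ω))) := by
  have h := submod (pushf P (fun ω => (f ω, g ω, k ω))) (isPMF_pushf P hP _)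
  rwa [pushf_marg_ac, pushf_marg_bc, pushf_marg_c] at h

lemma Hent_pushf_unit (P : Ω → ℝ) (hP : IsPMF P) :
    Hent (pushf P (fun _ : Ω => (0 : Fin 1))) = 0 := by
  have h1 : pushf P (fun _ : Ω => (0 : Fin 1)) 0 = 1 := by
    unfold pushf; simp [hP.2]
  simp [Hent, Fin.sum_univ_one, h1]

lemma HP_subadd (P : Ω → ℝ) (hP : IsPMF P) (f : Ω → α) (g : Ω → β) :
    Hent (pushf P (fun ω => (f ω, g ω))) ≤ Hent (pushf P f) + Hent (pushf P g) := by
  have h := HP_submod P hP f g (fun _ => (0 : Fin 1))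
  have e0 : Hent (pushf P (fun _ : Ω => (0 : Fin 1))) = 0 := Hent_pushf_unit P hP
  have e1 : Hent (pushf P (fun ω => (f ω, (0 : Fin 1)))) = Hent (pushf P f) :=
    Hent_pushf_recode P f (fun ω => (f ω, (0 : Fin 1)))
      (fun a => (a, 0)) (fun p => p.1) (fun ω => by simp [Subsingleton.elim (0 : Fin 1)])
      (fun ω => rfl)
  have e2 : Hent (pushf P (fun ω => (g ω, (0 : Fin 1)))) = Hent (pushf P g) :=
    Hent_pushf_recode P g (fun ω => (g ω, (0 : Fin 1)))
      (fun a => (a, 0)) (fun p => p.1) (fun ω => by simp [Subsingleton.elim (0 : Fin 1)])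
      (fun ω => rfl)
  have e3 : Hent (pushf P (fun ω => (f ω, g ω, (0 : Fin 1)))) =
      Hent (pushf P (fun ω => (f ω, g ω))) :=
    Hent_pushf_recode P (fun ω => (f ω, g ω)) (fun ω => (f ω, g ω, (0 : Fin 1)))
      (fun p => (p.1, p.2, 0)) (fun p => (p.1, p.2.1))
      (fun ω => by simp [Subsingleton.elim (0 : Fin 1)]) (fun ω => rfl)
  linarith

end AuxHelpers

/-- eq. (82) in the proof of Theorem 4: if `Y_{2,j} = a₂X_{1,j}+b₂X_{2,j}+N_{2,j}`
where, for every `j`, `N_{2,j}` is independent of `(M₁,M₂,X_{1,j},X_{2,j},Y_{2,1},…,Y_{2,j−1})`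
and has entropy `h`, then `I(M₁;Y₂ⁿ|M₂) ≤ n(log q − h)`. -/
theorem adaptive_rate_converse {F : Type*} [Field F] [Fintype F]
    {Ω S1 S2 : Type*} [Fintype Ω] [Fintype S1] [Fintype S2]
    (a2 b2 : F) (n : ℕ) (hn : 0 < n) (h : ℝ)
    (P : Ω → ℝ) (hP : IsPMF P)
    (M1 : Ω → S1) (M2 : Ω → S2) (X1 X2 N2 : Fin n → Ω → F)
    (Y2 : Fin n → Ω → F)
    (hY2 : ∀ (j : Fin n) (ω : Ω), Y2 j ω = a2 * X1 j ω + b2 * X2 j ω + N2 j ω)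
    (hindep : ∀ j : Fin n, Indep P (N2 j)
      (fun ω => (M1 ω, M2 ω, X1 j ω, X2 j ω,
        fun i : Fin j.1 => Y2 ⟨i.1, i.2.trans j.2⟩ ω)))
    (hH : ∀ j : Fin n, Hent (pushf P (N2 j)) = h) :
    cmiInfo (pushf P (fun ω => (M1 ω, fun j => Y2 j ω, M2 ω)))
      ≤ (n : ℝ) * (Real.log (Fintype.card F) - h) := by
  classical
  -- the truncated output sequences
  set Yle : (k : ℕ) → Ω → Fin k → F := fun k ω i =>
    if hik : i.1 < n then Y2 ⟨i.1, hik⟩ ω else 0 with hYle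
  set A : ℕ → ℝ := fun k => Hent (pushf P (fun ω => (M1 ω, M2 ω, Yle k ω))) with hA
  -- rewrite the goal using the marginal identities
  have hgoal : cmiInfo (pushf P (fun ω => (M1 ω, fun j => Y2 j ω, M2 ω)))
      = Hent (pushf P (fun ω => (M1 ω, M2 ω)))
        + Hent (pushf P (fun ω => ((fun j => Y2 j ω : Fin n → F), M2 ω)))
        - Hent (pushf P M2)
        - Hent (pushf P (fun ω => (M1 ω, (fun j => Y2 j ω : Fin n → F), M2 ω))) := by
    unfold cmiInfo
    rw [pushf_marg_ac P M1 (fun ω => (fun j => Y2 j ω : Fin n → F)) M2,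
        pushf_marg_bc P M1 (fun ω => (fun j => Y2 j ω : Fin n → F)) M2,
        pushf_marg_c P M1 (fun ω => (fun j => Y2 j ω : Fin n → F)) M2]
  rw [hgoal]
  -- step 1 : H(Yⁿ, M₂) ≤ n log q + H(M₂)
  have hsub : Hent (pushf P (fun ω => ((fun j => Y2 j ω : Fin n → F), M2 ω)))
      ≤ Hent (pushf P (fun ω => (fun j => Y2 j ω : Fin n → F))) + Hent (pushf P M2) :=
    HP_subadd P hP _ _
  have hmax : Hent (pushf P (fun ω => (fun j => Y2 j ω : Fin n → F)))
      ≤ (n : ℝ) * Real.log (Fintype.card F) := by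
    have h1 := Hent_le_log_card (pushf P (fun ω => (fun j => Y2 j ω : Fin n → F)))
      (isPMF_pushf P hP _)
    have h2 : (Fintype.card (Fin n → F) : ℝ) = (Fintype.card F : ℝ) ^ n := by
      rw [Fintype.card_fun]; push_cast; rw [Fintype.card_fin]
    rw [h2, Real.log_pow] at h1
    exact h1
  -- step 2 : telescoping lower bound for H(M₁, M₂, Yⁿ)
  have hA0 : A 0 = Hent (pushf P (fun ω => (M1 ω, M2 ω))) := by
    rw [hA]
    exact Hent_pushf_recode P (fun ω => (M1 ω, M2 ω)) (fun ω => (M1 ω, M2 ω, Yle 0 ω))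
      (fun p => (p.1, p.2, fun i : Fin 0 => i.elim0)) (fun p => (p.1, p.2.1))
      (fun ω => by
        refine congrArg (fun t => (M1 ω, M2 ω, t)) ?_
        funext i
        exact i.elim0)
      (fun ω => rfl)
  have hAn : A n = Hent (pushf P (fun ω => (M1 ω, (fun j => Y2 j ω : Fin n → F), M2 ω))) := by
    rw [hA]
    refine Hent_pushf_recode P (fun ω => (M1 ω, (fun j => Y2 j ω : Fin n → F), M2 ω))
      (fun ω => (M1 ω, M2 ω, Yle n ω))
      (fun p => (p.1, p.2.2, p.2.1)) (fun p => (p.1, p.2.2, p.2.1))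
      (fun ω => ?_) (fun ω => ?_)
    · refine congrArg (fun t => (M1 ω, M2 ω, t)) ?_
      funext i
      simp only [hYle]
      rw [dif_pos i.2]
    · refine congrArg (fun t => (M1 ω, t, M2 ω)) ?_
      funext i
      simp only [hYle]
      rw [dif_pos i.2]
  have hstep : ∀ k ∈ Finset.range n, h ≤ A (k + 1) - A k := by
    intro k hkr
    have hk : k < n := Finset.mem_range.1 hkr
    set j : Fin n := ⟨k, hk⟩ with hj
    -- submodularity
    have s1 := HP_submod P hP (Y2 j) (fun ω => (X1 j ω, X2 j ω))
      (fun ω => (M1 ω, M2 ω, Yle k ω))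
    -- A (k+1) is the entropy of (Y_j, M1, M2, Y^{<j})
    have e1 : A (k + 1) = Hent (pushf P (fun ω => (Y2 j ω, M1 ω, M2 ω, Yle k ω))) := by
      rw [hA]
      refine Hent_pushf_recode P (fun ω => (Y2 j ω, M1 ω, M2 ω, Yle k ω))
        (fun ω => (M1 ω, M2 ω, Yle (k + 1) ω))
        (fun q => (q.2.1, q.2.2.1, fun i : Fin (k + 1) =>
          if hik : i.1 < k then q.2.2.2 ⟨i.1, hik⟩ else q.1))
        (fun p => (p.2.2 ⟨k, Nat.lt_succ_self k⟩,
          p.1, p.2.1, fun i : Fin k => p.2.2 ⟨i.1, Nat.lt_succ_of_lt i.2⟩))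
        (fun ω => ?_) (fun ω => ?_)
      · refine congrArg (fun t => (M1 ω, M2 ω, t)) ?_
        funext i
        have hi2 : i.1 < k + 1 := i.2
        by_cases hik : i.1 < k
        · simp only [dif_pos hik]; rfl
        · simp only [dif_neg hik]
          simp only [hYle]
          have hivn : i.1 < n := by omega
          rw [dif_pos hivn]
          exact congrArg (fun t => Y2 t ω) (Fin.ext (by simp [hj]; omega))
      · refine congrArg₂ (fun y t => (y, M1 ω, M2 ω, t)) ?_ ?_
        · simp only [hYle]
          rw [dif_pos hk]
        · funext i
          rfl
    -- the prefix tuple agrees with Yle k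
    have hT : ∀ ω, (fun i : Fin j.1 => Y2 ⟨i.1, i.2.trans j.2⟩ ω) = Yle k ω := by
      intro ω
      funext i
      simp only [hYle]
      rw [dif_pos (i.2.trans j.2)]
    -- recode (Y_j, (X1,X2), rest) into (N_j, rest') using the channel equation
    have e2 : Hent (pushf P (fun ω => (Y2 j ω, (X1 j ω, X2 j ω), M1 ω, M2 ω, Yle k ω)))
        = Hent (pushf P (fun ω => (N2 j ω, M1 ω, M2 ω, X1 j ω, X2 j ω,
            fun i : Fin j.1 => Y2 ⟨i.1, i.2.trans j.2⟩ ω))) := by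
      refine (Hent_pushf_recode P
        (fun ω => (Y2 j ω, (X1 j ω, X2 j ω), M1 ω, M2 ω, Yle k ω))
        (fun ω => (N2 j ω, M1 ω, M2 ω, X1 j ω, X2 j ω,
            fun i : Fin j.1 => Y2 ⟨i.1, i.2.trans j.2⟩ ω))
        (fun q => (q.1 - (a2 * q.2.1.1 + b2 * q.2.1.2),
          q.2.2.1, q.2.2.2.1, q.2.1.1, q.2.1.2, q.2.2.2.2))
        (fun q => (a2 * q.2.2.2.1 + b2 * q.2.2.2.2.1 + q.1,
          (q.2.2.2.1, q.2.2.2.2.1), q.2.1, q.2.2.1, q.2.2.2.2.2))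
        (fun ω => ?_) (fun ω => ?_)).symm
      · dsimp only
        have hN : N2 j ω = Y2 j ω - (a2 * X1 j ω + b2 * X2 j ω) := by
          rw [hY2 j ω]; ring
        rw [hN, hT ω]
      · dsimp only
        rw [hY2 j ω, hT ω]
    -- reorder ((X1,X2), rest)
    have e3 : Hent (pushf P (fun ω => ((X1 j ω, X2 j ω), M1 ω, M2 ω, Yle k ω)))
        = Hent (pushf P (fun ω => (M1 ω, M2 ω, X1 j ω, X2 j ω,
            fun i : Fin j.1 => Y2 ⟨i.1, i.2.trans j.2⟩ ω))) := by
      refine (Hent_pushf_recode P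
        (fun ω => ((X1 j ω, X2 j ω), M1 ω, M2 ω, Yle k ω))
        (fun ω => (M1 ω, M2 ω, X1 j ω, X2 j ω,
            fun i : Fin j.1 => Y2 ⟨i.1, i.2.trans j.2⟩ ω))
        (fun q => (q.2.1, q.2.2.1, q.1.1, q.1.2, q.2.2.2))
        (fun q => ((q.2.2.1, q.2.2.2.1), q.1, q.2.1, q.2.2.2.2))
        (fun ω => ?_) (fun ω => ?_)).symm
      · dsimp only
        rw [hT ω]
      · dsimp only
        rw [hT ω]
    -- independence and the entropy of the noise
    have e4 : Hent (pushf P (fun ω => (N2 j ω, M1 ω, M2 ω, X1 j ω, X2 j ω,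
          fun i : Fin j.1 => Y2 ⟨i.1, i.2.trans j.2⟩ ω)))
        = h + Hent (pushf P (fun ω => (M1 ω, M2 ω, X1 j ω, X2 j ω,
          fun i : Fin j.1 => Y2 ⟨i.1, i.2.trans j.2⟩ ω))) := by
      rw [Hent_pushf_indep P hP (N2 j)
        (fun ω => (M1 ω, M2 ω, X1 j ω, X2 j ω,
          fun i : Fin j.1 => Y2 ⟨i.1, i.2.trans j.2⟩ ω)) (hindep j), hH j]
    have eAk : A k = Hent (pushf P (fun ω => (M1 ω, M2 ω, Yle k ω))) := rfl
    linarith [s1, e1, e2, e3, e4, eAk]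
  -- telescoping
  have htel : (n : ℝ) * h ≤ A n - A 0 := by
    rw [← Finset.sum_range_sub A n]
    calc (n : ℝ) * h = (Finset.range n).card • h := by
          rw [Finset.card_range, nsmul_eq_mul]
      _ ≤ ∑ k ∈ Finset.range n, (A (k + 1) - A k) :=
          Finset.card_nsmul_le_sum _ _ _ hstep
  linarith
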